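/- arXiv:2102.00116 — 3 statements merged into one kernel-verified Lean document; each statement's English description precedes it below -/
import Mathlib

section
/- Let n ≥ 2 and let τ ∈ S_n cover σ ∈ S_n in the right weak Bruhat order. Then the set partition of {1,…,n} into maximal intervals of τ either equals the set partition of {1,…,n} into maximal intervals of σ, or is a one-step refinement of it, i.e., is obtained from it by splitting exactly one block into two blocks (each again a set of consecutive integers). -/
/-- The 1-based position of the value `v ∈ {1,…,n}` in the one-line notation of
the permutation `π` of `{1,…,n}` (encoded as a permutation of `Fin n`, where
`⟨v-1,_⟩ : Fin n` represents the value/position `v`); junk value `0` outside range. -/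
def posOf {n : ℕ} (π : Equiv.Perm (Fin n)) (v : ℕ) : ℕ :=
  if h : 1 ≤ v ∧ v ≤ n then (π.symm ⟨v - 1, by omega⟩).val + 1 else 0

/-- The 1-based value `π(k)` at position `k` in the one-line notation of `π`;
junk value `0` outside range. -/
def valAt {n : ℕ} (π : Equiv.Perm (Fin n)) (k : ℕ) : ℕ :=
  if h : 1 ≤ k ∧ k ≤ n then (π ⟨k - 1, by omega⟩).val + 1 else 0

/-- The left descent set `Des_L(π) = {i : 1 ≤ i ≤ n-1, π⁻¹(i) > π⁻¹(i+1)}`. -/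
def DesL {n : ℕ} (π : Equiv.Perm (Fin n)) : Finset ℕ :=
  (Finset.Icc 1 (n - 1)).filter fun i => posOf π (i + 1) < posOf π i
/-- `B` is an interval of `π`: a set of consecutive integers `{a,…,b} ⊆ {1,…,n}`
occurring in this order in the one-line notation of `π`. -/
def IsInterval {n : ℕ} (π : Equiv.Perm (Fin n)) (B : Set ℕ) : Prop :=
  ∃ a b, 1 ≤ a ∧ a ≤ b ∧ b ≤ n ∧ B = Set.Icc a b ∧
    ∀ x, a ≤ x → x < b → posOf π x < posOf π (x + 1)

/-- `B` is a maximal interval of `π`: an interval not properly contained in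
another interval of `π`. -/
def IsMaxInterval {n : ℕ} (π : Equiv.Perm (Fin n)) (B : Set ℕ) : Prop :=
  IsInterval π B ∧ ∀ C, IsInterval π C → B ⊆ C → B = C

/-- The collection of maximal intervals of `π`. -/
def MaxIntervals {n : ℕ} (π : Equiv.Perm (Fin n)) : Set (Set ℕ) :=
  {B | IsMaxInterval π B}
/-- `τ` covers `σ` in the right weak Bruhat order: `τ = σ · sᵢ` for some
`1 ≤ i ≤ n-1` (the one-line notation of `τ` is that of `σ` with the entries at
positions `i` and `i+1` swapped) with `σ(i) < σ(i+1)`. -/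
def Covers {n : ℕ} (σ τ : Equiv.Perm (Fin n)) : Prop :=
  ∃ i, ∃ (h1 : 1 ≤ i) (h2 : i ≤ n - 1),
    valAt σ i < valAt σ (i + 1) ∧
    τ = σ * Equiv.swap ⟨i - 1, by omega⟩ ⟨i, by omega⟩

namespace Stmt1Aux

lemma posOf_eq {n : ℕ} (π : Equiv.Perm (Fin n)) {w : ℕ} (h1 : 1 ≤ w) (h2 : w ≤ n)
    (hw : w - 1 < n) : posOf π w = (π.symm ⟨w - 1, hw⟩).val + 1 := by
  unfold posOf; rw [dif_pos ⟨h1, h2⟩]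

lemma valAt_eq {n : ℕ} (π : Equiv.Perm (Fin n)) {k : ℕ} (h1 : 1 ≤ k) (h2 : k ≤ n)
    (hk : k - 1 < n) : valAt π k = (π ⟨k - 1, hk⟩).val + 1 := by
  unfold valAt; rw [dif_pos ⟨h1, h2⟩]

lemma posOf_bounds {n : ℕ} (π : Equiv.Perm (Fin n)) {w : ℕ} (h1 : 1 ≤ w) (h2 : w ≤ n) :
    1 ≤ posOf π w ∧ posOf π w ≤ n := by
  rw [posOf_eq π h1 h2 (by omega)]
  exact ⟨by omega, (π.symm ⟨w - 1, by omega⟩).isLt⟩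

lemma posOf_inj {n : ℕ} (π : Equiv.Perm (Fin n)) {x y : ℕ} (hx1 : 1 ≤ x) (hx2 : x ≤ n)
    (hy1 : 1 ≤ y) (hy2 : y ≤ n) (hne : x ≠ y) : posOf π x ≠ posOf π y := by
  rw [posOf_eq π hx1 hx2 (by omega), posOf_eq π hy1 hy2 (by omega)]
  intro h
  have h2' : π.symm ⟨x - 1, by omega⟩ = π.symm ⟨y - 1, by omega⟩ := Fin.ext (by omega)
  have := π.symm.injective h2'
  have : x - 1 = y - 1 := congrArg Fin.val this
  omega

lemma posOf_apply {n : ℕ} (π : Equiv.Perm (Fin n)) (k : Fin n) :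
    posOf π ((π k).val + 1) = k.val + 1 := by
  rw [posOf_eq π (by omega) (π k).isLt (by omega)]
  have : (⟨(π k).val + 1 - 1, by omega⟩ : Fin n) = π k := rfl
  rw [this, Equiv.symm_apply_apply]

lemma mem_DesL {n : ℕ} (π : Equiv.Perm (Fin n)) {j : ℕ} :
    j ∈ DesL π ↔ 1 ≤ j ∧ j ≤ n - 1 ∧ posOf π (j + 1) < posOf π j := by
  simp [DesL, Finset.mem_filter, Finset.mem_Icc, and_assoc]

lemma not_desL_lt {n : ℕ} (π : Equiv.Perm (Fin n)) {j : ℕ} (h1 : 1 ≤ j) (h2 : j ≤ n - 1)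
    (h : j ∉ DesL π) : posOf π j < posOf π (j + 1) := by
  have hb1 := posOf_bounds π h1 (by omega)
  have hb2 := posOf_bounds π (show 1 ≤ j + 1 by omega) (show j + 1 ≤ n by omega)
  have hne := posOf_inj π h1 (by omega) (show 1 ≤ j + 1 by omega) (show j + 1 ≤ n by omega)
    (by omega)
  rw [mem_DesL] at h
  push_neg at h
  have := h h1 h2
  omega

/-- `[a,b]` is a block of the "descent set" `D` inside `[1,n]`. -/
def IsBlock (n : ℕ) (D : Finset ℕ) (a b : ℕ) : Prop :=
  1 ≤ a ∧ a ≤ b ∧ b ≤ n ∧ (∀ x, a ≤ x → x < b → x ∉ D) ∧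
    (a = 1 ∨ a - 1 ∈ D) ∧ (b = n ∨ b ∈ D)

def Blocks (n : ℕ) (D : Finset ℕ) : Set (Set ℕ) :=
  {B | ∃ a b, IsBlock n D a b ∧ B = Set.Icc a b}

lemma block_unique {n : ℕ} {D : Finset ℕ} {a b a' b' x : ℕ}
    (h : IsBlock n D a b) (h' : IsBlock n D a' b')
    (hx : a ≤ x ∧ x ≤ b) (hx' : a' ≤ x ∧ x ≤ b') : a = a' ∧ b = b' := by
  obtain ⟨ha1, hab, hbn, hint, hL, hR⟩ := h
  obtain ⟨ha1', hab', hbn', hint', hL', hR'⟩ := h'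
  constructor
  · by_contra hne
    rcases Nat.lt_or_ge a a' with hlt | hge
    · have h1 : a' - 1 ∉ D := hint (a' - 1) (by omega) (by omega)
      rcases hL' with h2 | h2
      · omega
      · exact h1 h2
    · have hlt : a' < a := by omega
      have h1 : a - 1 ∉ D := hint' (a - 1) (by omega) (by omega)
      rcases hL with h2 | h2
      · omega
      · exact h1 h2
  · by_contra hne
    rcases Nat.lt_or_ge b b' with hlt | hge
    · have h1 : b ∉ D := hint' b (by omega) (by omega)
      rcases hR with h2 | h2
      · omega
      · exact h1 h2
    · have hlt : b' < b := by omega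
      have h1 : b' ∉ D := hint b' (by omega) (by omega)
      rcases hR' with h2 | h2
      · omega
      · exact h1 h2

lemma maxIntervals_eq_blocks {n : ℕ} (π : Equiv.Perm (Fin n)) :
    MaxIntervals π = Blocks n (DesL π) := by
  ext B
  constructor
  · rintro ⟨⟨a, b, ha1, hab, hbn, hB, hmono⟩, hmax⟩
    refine ⟨a, b, ⟨ha1, hab, hbn, ?_, ?_, ?_⟩, hB⟩
    · intro x hx1 hx2 hxD
      rw [mem_DesL] at hxD
      have := hmono x hx1 hx2
      omega
    · by_contra hc
      push_neg at hc
      obtain ⟨hc1, hc2⟩ := hc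
      have ha2 : 2 ≤ a := by omega
      have hlt : posOf π (a - 1) < posOf π a := by
        have := not_desL_lt π (show 1 ≤ a - 1 by omega) (show a - 1 ≤ n - 1 by omega) hc2
        have he : a - 1 + 1 = a := by omega
        rwa [he] at this
      have hC : IsInterval π (Set.Icc (a - 1) b) := by
        refine ⟨a - 1, b, by omega, by omega, hbn, rfl, ?_⟩
        intro x hx1 hx2
        rcases Nat.eq_or_lt_of_le hx1 with h | h
        · rw [← h]
          have he2 : a - 1 + 1 = a := by omega
          rwa [he2]
        · exact hmono x (by omega) hx2
      have hsub : B ⊆ Set.Icc (a - 1) b := by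
        rw [hB]; intro y hy; simp only [Set.mem_Icc] at *; omega
      have heq := hmax _ hC hsub
      have : (a - 1 : ℕ) ∈ B := by
        rw [heq]; simp only [Set.mem_Icc]; omega
      rw [hB] at this; simp only [Set.mem_Icc] at this; omega
    · by_contra hc
      push_neg at hc
      obtain ⟨hc1, hc2⟩ := hc
      have hbn' : b < n := by omega
      have hlt : posOf π b < posOf π (b + 1) :=
        not_desL_lt π (by omega) (by omega) hc2
      have hC : IsInterval π (Set.Icc a (b + 1)) := by
        refine ⟨a, b + 1, ha1, by omega, by omega, rfl, ?_⟩
        intro x hx1 hx2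
        rcases Nat.lt_or_ge x b with h | h
        · exact hmono x hx1 h
        · have he : x = b := by omega
          subst he; exact hlt
      have hsub : B ⊆ Set.Icc a (b + 1) := by
        rw [hB]; intro y hy; simp only [Set.mem_Icc] at *; omega
      have heq := hmax _ hC hsub
      have : (b + 1 : ℕ) ∈ B := by
        rw [heq]; simp only [Set.mem_Icc]; omega
      rw [hB] at this; simp only [Set.mem_Icc] at this; omega
  · rintro ⟨a, b, ⟨ha1, hab, hbn, hint, hL, hR⟩, hB⟩
    constructor
    · refine ⟨a, b, ha1, hab, hbn, hB, ?_⟩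
      intro x hx1 hx2
      exact not_desL_lt π (by omega) (by omega) (hint x hx1 hx2)
    · rintro C ⟨a', b', ha1', hab', hbn', hC, hmono'⟩ hsub
      subst hB; subst hC
      have hmema : a ∈ Set.Icc a' b' := hsub (by simp only [Set.mem_Icc]; omega)
      have hmemb : b ∈ Set.Icc a' b' := hsub (by simp only [Set.mem_Icc]; omega)
      simp only [Set.mem_Icc] at hmema hmemb
      have hae : a' = a := by
        by_contra hne
        have hlt : a' < a := by omega
        have h1 : posOf π (a - 1) < posOf π a := by
          have := hmono' (a - 1) (by omega) (by omega)
          have he : a - 1 + 1 = a := by omega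
          rwa [he] at this
        rcases hL with h2 | h2
        · omega
        · rw [mem_DesL] at h2
          have he : a - 1 + 1 = a := by omega
          rw [he] at h2
          omega
      have hbe : b' = b := by
        by_contra hne
        have hlt : b < b' := by omega
        have h1 : posOf π b < posOf π (b + 1) := hmono' b (by omega) (by omega)
        rcases hR with h2 | h2
        · omega
        · rw [mem_DesL] at h2; omega
      rw [hae, hbe]

lemma blocks_insert {n : ℕ} (D : Finset ℕ) (u : ℕ) (hu1 : 1 ≤ u) (hu2 : u ≤ n - 1)
    (hn : 2 ≤ n) (huD : u ∉ D) :
    ∃ a b, IsBlock n D a b ∧ a ≤ u ∧ u < b ∧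
      IsBlock n (insert u D) a u ∧ IsBlock n (insert u D) (u + 1) b ∧
      Blocks n (insert u D) = (Blocks n D \ {Set.Icc a b}) ∪ {Set.Icc a u, Set.Icc (u + 1) b} := by
  classical
  set P : ℕ → Prop := fun a => a = 1 ∨ a - 1 ∈ D with hP
  have hP1 : P 1 := Or.inl rfl
  set a := Nat.findGreatest P u with haDef
  have ha1 : 1 ≤ a := Nat.le_findGreatest hu1 hP1
  have hau : a ≤ u := Nat.findGreatest_le u
  have hPa : P a := Nat.findGreatest_spec hu1 hP1
  have hagr : ∀ m, a < m → m ≤ u → ¬ P m := fun m h1 h2 => Nat.findGreatest_is_greatest h1 h2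
  have hEx : ∃ k, u + k = n ∨ u + k ∈ D := ⟨n - u, Or.inl (by omega)⟩
  set b := u + Nat.find hEx with hbDef
  have hQb : b = n ∨ b ∈ D := Nat.find_spec hEx
  have hbmin : ∀ x, u ≤ x → x < b → ¬(x = n ∨ x ∈ D) := by
    intro x hx1 hx2 hQ
    have h1 : x - u < Nat.find hEx := by omega
    have h2 := Nat.find_min hEx h1
    have he : u + (x - u) = x := by omega
    rw [he] at h2
    exact h2 hQ
  have hbn : b ≤ n := by
    have : Nat.find hEx ≤ n - u := Nat.find_le (Or.inl (by omega))
    omega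
  have hub : u < b := by
    by_contra h
    have h0 : Nat.find hEx = 0 := by omega
    have hspec := Nat.find_spec hEx
    rw [h0, Nat.add_zero] at hspec
    rcases hspec with h' | h'
    · omega
    · exact huD h'
  have hint : ∀ x, a ≤ x → x < b → x ∉ D := by
    intro x hx1 hx2 hxD
    rcases Nat.lt_or_ge x u with h | h
    · exact hagr (x + 1) (by omega) (by omega) (Or.inr (by simpa using hxD))
    · rcases Nat.eq_or_lt_of_le h with h' | h'
      · exact huD (h' ▸ hxD)
      · exact hbmin x (by omega) hx2 (Or.inr hxD)
  have hBlock : IsBlock n D a b := ⟨ha1, by omega, hbn, hint, hPa, hQb⟩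
  have hBlock1 : IsBlock n (insert u D) a u := by
    refine ⟨ha1, hau, by omega, ?_, ?_, Or.inr (Finset.mem_insert_self u D)⟩
    · intro x hx1 hx2 hxD
      rcases Finset.mem_insert.mp hxD with h | h
      · omega
      · exact hint x hx1 (by omega) h
    · rcases hPa with h | h
      · exact Or.inl h
      · exact Or.inr (Finset.mem_insert_of_mem h)
  have hBlock2 : IsBlock n (insert u D) (u + 1) b := by
    refine ⟨by omega, by omega, hbn, ?_, Or.inr (by simpa using Finset.mem_insert_self u D), ?_⟩
    · intro x hx1 hx2 hxD
      rcases Finset.mem_insert.mp hxD with h | h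
      · omega
      · exact hint x (by omega) hx2 h
    · rcases hQb with h | h
      · exact Or.inl h
      · exact Or.inr (Finset.mem_insert_of_mem h)
  refine ⟨a, b, hBlock, hau, hub, hBlock1, hBlock2, ?_⟩
  ext B
  constructor
  · rintro ⟨a', b', hB', rfl⟩
    by_cases h1 : Set.Icc a' b' = Set.Icc a u
    · exact Or.inr (Or.inl h1)
    by_cases h2 : Set.Icc a' b' = Set.Icc (u + 1) b
    · exact Or.inr (Or.inr h2)
    left
    have hnu : ¬(a' ≤ u ∧ u ≤ b') := by
      intro hc
      have := block_unique hB' hBlock1 hc ⟨hau, le_refl u⟩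
      exact h1 (by rw [this.1, this.2])
    have hnu1 : ¬(a' ≤ u + 1 ∧ u + 1 ≤ b') := by
      intro hc
      have := block_unique hB' hBlock2 hc ⟨le_refl (u + 1), by omega⟩
      exact h2 (by rw [this.1, this.2])
    obtain ⟨ha1', hab', hbn', hint', hL', hR'⟩ := hB'
    refine ⟨⟨a', b', ⟨ha1', hab', hbn', ?_, ?_, ?_⟩, rfl⟩, ?_⟩
    · intro x hx1 hx2 hxD
      exact hint' x hx1 hx2 (Finset.mem_insert_of_mem hxD)
    · rcases hL' with h | h
      · exact Or.inl h
      · rcases Finset.mem_insert.mp h with h' | h'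
        · exfalso; exact hnu1 ⟨by omega, by omega⟩
        · exact Or.inr h'
    · rcases hR' with h | h
      · exact Or.inl h
      · rcases Finset.mem_insert.mp h with h' | h'
        · exfalso; exact hnu ⟨by omega, by omega⟩
        · exact Or.inr h'
    · simp only [Set.mem_singleton_iff]
      intro hc
      have : u ∈ Set.Icc a' b' := by
        rw [hc]; simp only [Set.mem_Icc]; omega
      simp only [Set.mem_Icc] at this
      exact hnu this
  · rintro (⟨⟨a', b', hB', rfl⟩, hne⟩ | h)
    · simp only [Set.mem_singleton_iff] at hne
      have hnu : ¬(a' ≤ u ∧ u ≤ b') := by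
        intro hc
        have := block_unique hB' hBlock hc ⟨hau, by omega⟩
        exact hne (by rw [this.1, this.2])
      obtain ⟨ha1', hab', hbn', hint', hL', hR'⟩ := hB'
      refine ⟨a', b', ⟨ha1', hab', hbn', ?_, ?_, ?_⟩, rfl⟩
      · intro x hx1 hx2 hxD
        rcases Finset.mem_insert.mp hxD with h' | h'
        · exact hnu ⟨by omega, by omega⟩
        · exact hint' x hx1 hx2 h'
      · rcases hL' with h' | h'
        · exact Or.inl h'
        · exact Or.inr (Finset.mem_insert_of_mem h')
      · rcases hR' with h' | h'
        · exact Or.inl h'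
        · exact Or.inr (Finset.mem_insert_of_mem h')
    · rcases h with h | h
      · exact ⟨a, u, hBlock1, h⟩
      · exact ⟨u + 1, b, hBlock2, h⟩

end Stmt1Aux

open Stmt1Aux in
/-- if `τ` covers `σ` in the right weak Bruhat order, then the set
partition of `{1,…,n}` into maximal intervals of `τ` either equals that of `σ`,
or is obtained from it by splitting exactly one block into two blocks. -/
theorem stmt1 {n : ℕ} (hn : 2 ≤ n) (σ τ : Equiv.Perm (Fin n))
    (hcov : Covers σ τ) :
    MaxIntervals τ = MaxIntervals σ ∨
      ∃ B B₁ B₂ : Set ℕ, B ∈ MaxIntervals σ ∧ B₁ ∈ MaxIntervals τ ∧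
        B₂ ∈ MaxIntervals τ ∧ B₁ ≠ B₂ ∧ Disjoint B₁ B₂ ∧ B₁ ∪ B₂ = B ∧
        MaxIntervals τ = (MaxIntervals σ \ {B}) ∪ {B₁, B₂} := by
  classical
  obtain ⟨i, h1, h2, hlt, heq⟩ := hcov
  have hi1 : i - 1 < n := by omega
  have hi2 : i < n := by omega
  set p : Fin n := ⟨i - 1, hi1⟩ with hpDef
  set q : Fin n := ⟨i, hi2⟩ with hqDef
  set u := (σ p).val + 1 with huDef
  set v := (σ q).val + 1 with hvDef
  have hu1 : 1 ≤ u := by omega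
  have hun : u ≤ n := (σ p).isLt
  have hv1 : 1 ≤ v := by omega
  have hvn : v ≤ n := (σ q).isLt
  have huv : u < v := by
    rw [valAt_eq σ h1 (by omega) (by omega),
      valAt_eq σ (show 1 ≤ i + 1 by omega) (show i + 1 ≤ n by omega) (by omega)] at hlt
    exact hlt
  have htp : τ p = σ q := by
    rw [heq, Equiv.Perm.mul_apply]
    congr 1
    exact Equiv.swap_apply_left _ _
  have htq : τ q = σ p := by
    rw [heq, Equiv.Perm.mul_apply]
    congr 1
    exact Equiv.swap_apply_right _ _
  have hposu : posOf σ u = i := by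
    have h := posOf_apply σ p
    rw [huDef, h]
    show i - 1 + 1 = i
    omega
  have hposv : posOf σ v = i + 1 := by
    have h := posOf_apply σ q
    rw [hvDef, h]
  have hpostu : posOf τ u = i + 1 := by
    have h := posOf_apply τ q
    rw [htq] at h
    rw [huDef, h]
  have hpostv : posOf τ v = i := by
    have h := posOf_apply τ p
    rw [htp] at h
    rw [hvDef, h]
    show i - 1 + 1 = i
    omega
  have hother : ∀ w, 1 ≤ w → w ≤ n → w ≠ u → w ≠ v → posOf τ w = posOf σ w := by
    intro w hw1 hwn hwu hwv
    have hwlt : w - 1 < n := by omega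
    have hσr : σ (σ.symm ⟨w - 1, hwlt⟩) = ⟨w - 1, hwlt⟩ := Equiv.apply_symm_apply σ _
    have hrp : σ.symm ⟨w - 1, hwlt⟩ ≠ p := by
      intro h
      apply hwu
      rw [h] at hσr
      have h3 : (σ p).val = w - 1 := congrArg Fin.val hσr
      omega
    have hrq : σ.symm ⟨w - 1, hwlt⟩ ≠ q := by
      intro h
      apply hwv
      rw [h] at hσr
      have h3 : (σ q).val = w - 1 := congrArg Fin.val hσr
      omega
    have key : τ.symm ⟨w - 1, hwlt⟩ = σ.symm ⟨w - 1, hwlt⟩ := by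
      rw [Equiv.symm_apply_eq, heq, Equiv.Perm.mul_apply]
      rw [show (Equiv.swap (⟨i - 1, by omega⟩ : Fin n) ⟨i, by omega⟩) (σ.symm ⟨w - 1, hwlt⟩)
        = σ.symm ⟨w - 1, hwlt⟩ from Equiv.swap_apply_of_ne_of_ne hrp hrq]
      exact hσr.symm
    rw [posOf_eq τ hw1 hwn hwlt, posOf_eq σ hw1 hwn hwlt, key]
  have hdes : ∀ j, 1 ≤ j → j ≤ n - 1 →
      ((posOf τ (j + 1) < posOf τ j) ↔
        ((posOf σ (j + 1) < posOf σ j) ∨ (v = u + 1 ∧ j = u))) := by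
    intro j hj1 hj2
    have e1 : j = u → posOf σ j = i ∧ posOf τ j = i + 1 := by
      intro h; rw [h]; exact ⟨hposu, hpostu⟩
    have e2 : j = v → posOf σ j = i + 1 ∧ posOf τ j = i := by
      intro h; rw [h]; exact ⟨hposv, hpostv⟩
    have e3 : j ≠ u → j ≠ v → posOf τ j = posOf σ j ∧ posOf σ j ≠ i ∧ posOf σ j ≠ i + 1 := by
      intro h h'
      refine ⟨hother j hj1 (by omega) h h', ?_, ?_⟩
      · have := posOf_inj σ hj1 (by omega) hu1 hun h
        rwa [hposu] at this
      · have := posOf_inj σ hj1 (by omega) hv1 hvn h'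
        rwa [hposv] at this
    have f1 : j + 1 = u → posOf σ (j + 1) = i ∧ posOf τ (j + 1) = i + 1 := by
      intro h; rw [h]; exact ⟨hposu, hpostu⟩
    have f2 : j + 1 = v → posOf σ (j + 1) = i + 1 ∧ posOf τ (j + 1) = i := by
      intro h; rw [h]; exact ⟨hposv, hpostv⟩
    have f3 : j + 1 ≠ u → j + 1 ≠ v →
        posOf τ (j + 1) = posOf σ (j + 1) ∧ posOf σ (j + 1) ≠ i ∧ posOf σ (j + 1) ≠ i + 1 := by
      intro h h'
      refine ⟨hother (j + 1) (by omega) (by omega) h h', ?_, ?_⟩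
      · have := posOf_inj σ (show 1 ≤ j + 1 by omega) (by omega) hu1 hun h
        rwa [hposu] at this
      · have := posOf_inj σ (show 1 ≤ j + 1 by omega) (by omega) hv1 hvn h'
        rwa [hposv] at this
    omega
  by_cases hcase : v = u + 1
  · right
    have hu2 : u ≤ n - 1 := by omega
    have huD : u ∉ DesL σ := by
      rw [mem_DesL]
      push_neg
      intro _ _
      rw [← hcase, hposv, hposu]
      omega
    have hDes : DesL τ = insert u (DesL σ) := by
      ext j
      rw [Finset.mem_insert, mem_DesL, mem_DesL]
      constructor
      · rintro ⟨hj1, hj2, hlt'⟩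
        rcases (hdes j hj1 hj2).mp hlt' with h | h
        · exact Or.inr ⟨hj1, hj2, h⟩
        · exact Or.inl h.2
      · rintro (h | ⟨hj1, hj2, hlt'⟩)
        · subst h
          exact ⟨hu1, hu2, (hdes u hu1 hu2).mpr (Or.inr ⟨hcase, rfl⟩)⟩
        · exact ⟨hj1, hj2, (hdes j hj1 hj2).mpr (Or.inl hlt')⟩
    obtain ⟨a, b, hBlock, hau, hub, hB1, hB2, hEq⟩ :=
      blocks_insert (DesL σ) u hu1 hu2 hn huD
    refine ⟨Set.Icc a b, Set.Icc a u, Set.Icc (u + 1) b, ?_, ?_, ?_, ?_, ?_, ?_, ?_⟩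
    · rw [maxIntervals_eq_blocks]
      exact ⟨a, b, hBlock, rfl⟩
    · rw [maxIntervals_eq_blocks, hDes]
      exact ⟨a, u, hB1, rfl⟩
    · rw [maxIntervals_eq_blocks, hDes]
      exact ⟨u + 1, b, hB2, rfl⟩
    · intro h
      have hm : u ∈ Set.Icc a u := by simp only [Set.mem_Icc]; omega
      rw [h] at hm
      simp only [Set.mem_Icc] at hm
      omega
    · rw [Set.disjoint_left]
      intro x hx hx'
      simp only [Set.mem_Icc] at hx hx'
      omega
    · ext x
      simp only [Set.mem_union, Set.mem_Icc]
      omega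
    · rw [maxIntervals_eq_blocks τ, maxIntervals_eq_blocks σ, hDes]
      exact hEq
  · left
    have hDes : DesL τ = DesL σ := by
      ext j
      rw [mem_DesL, mem_DesL]
      constructor
      · rintro ⟨hj1, hj2, hlt'⟩
        rcases (hdes j hj1 hj2).mp hlt' with h | h
        · exact ⟨hj1, hj2, h⟩
        · exact absurd h.1 hcase
      · rintro ⟨hj1, hj2, hlt'⟩
        exact ⟨hj1, hj2, (hdes j hj1 hj2).mpr (Or.inl hlt')⟩
    rw [maxIntervals_eq_blocks τ, maxIntervals_eq_blocks σ, hDes]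
end

section
/- Let S be a standard Young tableau with n ≥ 2 cells and let π_S be its row word. Then the left descent set of π_S equals the descent set of S: Des_L(π_S) = Des(S). -/
/-- A standard Young tableau with `n` cells, recorded by the (1-based) row and
column of each entry `i ∈ {1,…,n}`: the occupied cells form a Young diagram,
distinct entries occupy distinct cells, and entries strictly increase along
rows (left to right) and down columns. -/
structure SYT (n : ℕ) where
  row : ℕ → ℕ
  col : ℕ → ℕ
  row_pos : ∀ i, 1 ≤ i → i ≤ n → 1 ≤ row i
  col_pos : ∀ i, 1 ≤ i → i ≤ n → 1 ≤ col i
  shape : ∀ i, 1 ≤ i → i ≤ n → ∀ r c, 1 ≤ r → r ≤ row i → 1 ≤ c → c ≤ col i →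
    ∃ j, 1 ≤ j ∧ j ≤ n ∧ row j = r ∧ col j = c
  cell_inj : ∀ i j, 1 ≤ i → i ≤ n → 1 ≤ j → j ≤ n →
    row i = row j → col i = col j → i = j
  row_incr : ∀ i j, 1 ≤ i → i ≤ n → 1 ≤ j → j ≤ n →
    row i = row j → i < j → col i < col j
  col_incr : ∀ i j, 1 ≤ i → i ≤ n → 1 ≤ j → j ≤ n →
    col i = col j → i < j → row i < row j

/-- The descent set `Des(S) = {i : 1 ≤ i ≤ n-1, i+1 lies in a row strictly
below the row of i}`. -/
def DesT {n : ℕ} (S : SYT n) : Finset ℕ :=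
  (Finset.Icc 1 (n - 1)).filter fun i => S.row i < S.row (i + 1)
/-- `π` is the row word of `S`: the entries of `S` are listed row by row from
the bottom row to the top row, each row read left to right.  Equivalently, the
value `i` occurs before the value `j` in the one-line notation of `π` iff `i`
lies in a strictly lower row than `j`, or in the same row strictly to the left. -/
def IsRowWord {n : ℕ} (S : SYT n) (π : Equiv.Perm (Fin n)) : Prop :=
  ∀ i j, 1 ≤ i → i ≤ n → 1 ≤ j → j ≤ n →
    (posOf π i < posOf π j ↔
      (S.row j < S.row i ∨ (S.row i = S.row j ∧ S.col i < S.col j)))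

/-- for a standard Young tableau `S` with `n ≥ 2` cells and its
row word `π_S`, one has `Des_L(π_S) = Des(S)`. -/
theorem stmt7 {n : ℕ} (hn : 2 ≤ n) (S : SYT n) (πS : Equiv.Perm (Fin n))
    (hrw : IsRowWord S πS) :
    DesL πS = DesT S := by
  ext i
  simp only [DesL, DesT, Finset.mem_filter, Finset.mem_Icc]
  constructor
  · rintro ⟨⟨h1, h2⟩, h3⟩
    refine ⟨⟨h1, h2⟩, ?_⟩
    have := (hrw (i+1) i (by omega) (by omega) h1 (by omega)).mp h3
    rcases this with h | ⟨he, hc⟩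
    · exact h
    · exact absurd (S.row_incr i (i+1) h1 (by omega) (by omega) (by omega) he.symm (by omega)) (by omega)
  · rintro ⟨⟨h1, h2⟩, h3⟩
    exact ⟨⟨h1, h2⟩, (hrw (i+1) i (by omega) (by omega) h1 (by omega)).mpr (Or.inl h3)⟩
end

section
/- Let σ, τ ∈ S_n with Inv_L(σ) ⊆ Inv_L(τ) (i.e., σ ≤ τ in the right weak Bruhat order). Then there exists a sequence σ = π₀, π₁, …, π_k = τ in S_n such that for each 0 ≤ j < k, the permutation π_{j+1} covers π_j in the right weak Bruhat order, Des_L(π_j) ⊆ Des_L(π_{j+1}), and |Des_L(π_{j+1}) \ Des_L(π_j)| ≤ 1. -/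
/-- The left inversion set
`Inv_L(π) = {(i,j) : 1 ≤ i < j ≤ n, π⁻¹(i) > π⁻¹(j)}`. -/
def InvL {n : ℕ} (π : Equiv.Perm (Fin n)) : Set (ℕ × ℕ) :=
  {p | 1 ≤ p.1 ∧ p.1 < p.2 ∧ p.2 ≤ n ∧ posOf π p.2 < posOf π p.1}




namespace S13
variable {n : ℕ}

lemma posOf_eq (π : Equiv.Perm (Fin n)) {v : ℕ} (h1 : 1 ≤ v) (h2 : v ≤ n) :
    posOf π v = (π.symm ⟨v - 1, by omega⟩).val + 1 := by
  rw [posOf, dif_pos ⟨h1, h2⟩]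

lemma valAt_eq (π : Equiv.Perm (Fin n)) {k : ℕ} (h1 : 1 ≤ k) (h2 : k ≤ n) :
    valAt π k = (π ⟨k - 1, by omega⟩).val + 1 := by
  rw [valAt, dif_pos ⟨h1, h2⟩]

lemma valAt_mem (π : Equiv.Perm (Fin n)) {k : ℕ} (h1 : 1 ≤ k) (h2 : k ≤ n) :
    1 ≤ valAt π k ∧ valAt π k ≤ n := by
  rw [valAt_eq π h1 h2]
  exact ⟨by omega, by have := (π ⟨k - 1, by omega⟩).isLt; omega⟩

lemma posOf_mem (π : Equiv.Perm (Fin n)) {v : ℕ} (h1 : 1 ≤ v) (h2 : v ≤ n) :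
    1 ≤ posOf π v ∧ posOf π v ≤ n := by
  rw [posOf_eq π h1 h2]
  exact ⟨by omega, by have := (π.symm ⟨v - 1, by omega⟩).isLt; omega⟩

lemma posOf_inj (π : Equiv.Perm (Fin n)) {u v : ℕ} (hu1 : 1 ≤ u) (hu2 : u ≤ n)
    (hv1 : 1 ≤ v) (hv2 : v ≤ n) (h : posOf π u = posOf π v) : u = v := by
  rw [posOf_eq π hu1 hu2, posOf_eq π hv1 hv2] at h
  have h2 : (⟨u - 1, by omega⟩ : Fin n) = ⟨v - 1, by omega⟩ :=
    π.symm.injective (Fin.ext (by omega))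
  have h3 := congrArg Fin.val h2
  simp only [Fin.val_mk] at h3
  omega

lemma posOf_valAt (π : Equiv.Perm (Fin n)) {k : ℕ} (h1 : 1 ≤ k) (h2 : k ≤ n) :
    posOf π (valAt π k) = k := by
  obtain ⟨hm1, hm2⟩ := valAt_mem π h1 h2
  rw [posOf_eq π hm1 hm2]
  have key : π.symm ⟨valAt π k - 1, by omega⟩ = ⟨k - 1, by omega⟩ := by
    rw [Equiv.symm_apply_eq]
    apply Fin.ext
    have hv := valAt_eq π h1 h2
    simp only [Fin.val_mk]
    omega
  rw [key]
  simp only [Fin.val_mk]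
  omega

lemma valAt_posOf (π : Equiv.Perm (Fin n)) {v : ℕ} (h1 : 1 ≤ v) (h2 : v ≤ n) :
    valAt π (posOf π v) = v := by
  obtain ⟨hm1, hm2⟩ := posOf_mem π h1 h2
  rw [valAt_eq π hm1 hm2]
  have key : π ⟨posOf π v - 1, by omega⟩ = ⟨v - 1, by omega⟩ := by
    rw [Equiv.apply_eq_iff_eq_symm_apply]
    apply Fin.ext
    have hp := posOf_eq π h1 h2
    simp only [Fin.val_mk]
    omega
  rw [key]
  simp only [Fin.val_mk]
  omega

end S13

namespace S13
variable {n : ℕ}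

lemma posOf_mul_swap (σ : Equiv.Perm (Fin n)) {i : ℕ} (h1 : 1 ≤ i) (h2 : i ≤ n - 1)
    {v : ℕ} (hv1 : 1 ≤ v) (hv2 : v ≤ n) :
    posOf (σ * Equiv.swap ⟨i - 1, by omega⟩ ⟨i, by omega⟩) v =
      if posOf σ v = i then i + 1 else if posOf σ v = i + 1 then i else posOf σ v := by
  rw [posOf_eq _ hv1 hv2, posOf_eq σ hv1 hv2]
  have hsymm : (σ * Equiv.swap (⟨i - 1, by omega⟩ : Fin n) ⟨i, by omega⟩).symm ⟨v - 1, by omega⟩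
      = Equiv.swap (⟨i - 1, by omega⟩ : Fin n) ⟨i, by omega⟩ (σ.symm ⟨v - 1, by omega⟩) := by
    simp [Equiv.Perm.mul_def]
  rw [hsymm, Equiv.swap_apply_def]
  split_ifs <;> simp_all [Fin.ext_iff] <;> omega

end S13


namespace S13
variable {n : ℕ}

lemma invL_mul_swap (σ : Equiv.Perm (Fin n)) {i : ℕ} (h1 : 1 ≤ i) (h2 : i ≤ n - 1)
    (hab : valAt σ i < valAt σ (i + 1)) :
    InvL (σ * Equiv.swap ⟨i - 1, by omega⟩ ⟨i, by omega⟩) =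
      InvL σ ∪ {(valAt σ i, valAt σ (i + 1))} := by
  have hi1 : 1 ≤ i + 1 := by omega
  have hi2 : i + 1 ≤ n := by omega
  have hii2 : i ≤ n := by omega
  set a := valAt σ i with ha
  set b := valAt σ (i + 1) with hb
  obtain ⟨ha1, ha2⟩ := valAt_mem σ h1 hii2
  obtain ⟨hb1, hb2⟩ := valAt_mem σ hi1 hi2
  have hpa : posOf σ a = i := posOf_valAt σ h1 hii2
  have hpb : posOf σ b = i + 1 := posOf_valAt σ hi1 hi2
  ext ⟨x, y⟩
  simp only [InvL, Set.mem_setOf_eq, Set.mem_union, Set.mem_singleton_iff, Prod.mk.injEq]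
  by_cases hr : 1 ≤ x ∧ x < y ∧ y ≤ n
  · obtain ⟨hx1, hxy, hy2⟩ := hr
    have hx2 : x ≤ n := by omega
    have hy1 : 1 ≤ y := by omega
    have hpx := posOf_mul_swap σ h1 h2 hx1 hx2
    have hpy := posOf_mul_swap σ h1 h2 hy1 hy2
    have hxa : x = a ↔ posOf σ x = i := by
      constructor
      · rintro rfl; exact hpa
      · intro h; exact posOf_inj σ hx1 hx2 ha1 ha2 (by rw [h, hpa])
    have hyb : y = b ↔ posOf σ y = i + 1 := by
      constructor
      · rintro rfl; exact hpb
      · intro h; exact posOf_inj σ hy1 hy2 hb1 hb2 (by rw [h, hpb])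
    have hne : posOf σ x ≠ posOf σ y := fun h => by
      have := posOf_inj σ hx1 hx2 hy1 hy2 h; omega
    have hxb : x = b ↔ posOf σ x = i + 1 := by
      constructor
      · rintro rfl; exact hpb
      · intro h; exact posOf_inj σ hx1 hx2 hb1 hb2 (by rw [h, hpb])
    have hya : y = a ↔ posOf σ y = i := by
      constructor
      · rintro rfl; exact hpa
      · intro h; exact posOf_inj σ hy1 hy2 ha1 ha2 (by rw [h, hpa])
    rw [hpx, hpy]
    have r1 := posOf_mem σ hx1 hx2
    have r2 := posOf_mem σ hy1 hy2
    split_ifs <;> omega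
  · constructor
    · rintro ⟨hx1, hxy, hy2, _⟩; exact absurd ⟨hx1, hxy, hy2⟩ hr
    · rintro (⟨hx1, hxy, hy2, _⟩ | ⟨rfl, rfl⟩)
      · exact absurd ⟨hx1, hxy, hy2⟩ hr
      · exact absurd ⟨ha1, hab, hb2⟩ hr

end S13


namespace S13
variable {n : ℕ}

lemma mem_desL_iff (π : Equiv.Perm (Fin n)) (j : ℕ) :
    j ∈ DesL π ↔ (j, j + 1) ∈ InvL π := by
  simp only [DesL, Finset.mem_filter, Finset.mem_Icc, InvL, Set.mem_setOf_eq]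
  constructor
  · rintro ⟨⟨hj1, hj2⟩, hlt⟩
    exact ⟨hj1, by omega, by omega, hlt⟩
  · rintro ⟨hj1, _, hj3, hlt⟩
    exact ⟨⟨hj1, by omega⟩, hlt⟩

lemma desL_step {σ τ : Equiv.Perm (Fin n)} {a b : ℕ}
    (h : InvL τ = InvL σ ∪ {(a, b)}) :
    DesL σ ⊆ DesL τ ∧ (DesL τ \ DesL σ).card ≤ 1 := by
  constructor
  · intro j hj
    rw [mem_desL_iff] at hj ⊢
    rw [h]; exact Set.mem_union_left _ hj
  · have hsub : DesL τ \ DesL σ ⊆ {a} := by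
      intro j hj
      rw [Finset.mem_sdiff] at hj
      obtain ⟨hjt, hjs⟩ := hj
      rw [mem_desL_iff, h] at hjt
      rw [mem_desL_iff] at hjs
      rcases hjt with hjt | hjt
      · exact absurd hjt hjs
      · simp only [Set.mem_singleton_iff, Prod.mk.injEq] at hjt
        simp [hjt.1]
    calc (DesL τ \ DesL σ).card ≤ ({a} : Finset ℕ).card := Finset.card_le_card hsub
      _ = 1 := Finset.card_singleton a

lemma eq_of_invL_eq {σ τ : Equiv.Perm (Fin n)} (h : InvL σ = InvL τ) : σ = τ := by
  have key : ∀ v, 1 ≤ v → v ≤ n → posOf σ v = posOf τ v := by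
    intro v hv1 hv2
    have hcard : ∀ π : Equiv.Perm (Fin n),
        ((Finset.Icc 1 n).filter fun u => posOf π u < posOf π v).card = posOf π v - 1 := by
      intro π
      obtain ⟨hp1, hp2⟩ := posOf_mem π hv1 hv2
      rw [show posOf π v - 1 = (Finset.Icc 1 (posOf π v - 1)).card by
        rw [Nat.card_Icc]; omega]
      apply Finset.card_bij (fun u _ => posOf π u)
      · intro u hu
        simp only [Finset.mem_filter, Finset.mem_Icc] at hu ⊢
        obtain ⟨⟨hu1, hu2⟩, hlt⟩ := hu
        obtain ⟨q1, _⟩ := posOf_mem π hu1 hu2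
        omega
      · intro u hu u' hu' he
        simp only [Finset.mem_filter, Finset.mem_Icc] at hu hu'
        exact posOf_inj π hu.1.1 hu.1.2 hu'.1.1 hu'.1.2 he
      · intro q hq
        simp only [Finset.mem_Icc] at hq
        have hq2 : q ≤ n := by omega
        refine ⟨valAt π q, ?_, posOf_valAt π hq.1 hq2⟩
        simp only [Finset.mem_filter, Finset.mem_Icc]
        obtain ⟨m1, m2⟩ := valAt_mem π hq.1 hq2
        rw [posOf_valAt π hq.1 hq2]
        exact ⟨⟨m1, m2⟩, by omega⟩
    have hfilter : ((Finset.Icc 1 n).filter fun u => posOf σ u < posOf σ v)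
        = (Finset.Icc 1 n).filter fun u => posOf τ u < posOf τ v := by
      apply Finset.filter_congr
      intro u hu
      simp only [Finset.mem_Icc] at hu
      rcases lt_trichotomy u v with huv | rfl | huv
      · have h1 : (u, v) ∈ InvL σ ↔ (u, v) ∈ InvL τ := by rw [h]
        simp only [InvL, Set.mem_setOf_eq] at h1
        have n1 : posOf σ u ≠ posOf σ v := fun e => by
          have := posOf_inj σ hu.1 hu.2 hv1 hv2 e; omega
        have n2 : posOf τ u ≠ posOf τ v := fun e => by
          have := posOf_inj τ hu.1 hu.2 hv1 hv2 e; omega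
        constructor
        · intro hlt
          by_contra hc
          have : posOf τ v < posOf τ u := by omega
          have := h1.2 ⟨hu.1, huv, hv2, this⟩
          omega
        · intro hlt
          by_contra hc
          have : posOf σ v < posOf σ u := by omega
          have := h1.1 ⟨hu.1, huv, hv2, this⟩
          omega
      · omega
      · have h1 : (v, u) ∈ InvL σ ↔ (v, u) ∈ InvL τ := by rw [h]
        simp only [InvL, Set.mem_setOf_eq] at h1
        constructor
        · intro hlt
          exact (h1.1 ⟨hv1, huv, hu.2, hlt⟩).2.2.2
        · intro hlt
          exact (h1.2 ⟨hv1, huv, hu.2, hlt⟩).2.2.2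
    have := hcard σ
    rw [hfilter] at this
    rw [hcard τ] at this
    obtain ⟨p1, _⟩ := posOf_mem σ hv1 hv2
    obtain ⟨p2, _⟩ := posOf_mem τ hv1 hv2
    omega
  have hsymm : ∀ x : Fin n, σ.symm x = τ.symm x := by
    intro x
    have hx1 : 1 ≤ x.val + 1 := by omega
    have hx2 : x.val + 1 ≤ n := x.isLt
    have hk := key (x.val + 1) hx1 hx2
    have hfin : (⟨x.val + 1 - 1, by omega⟩ : Fin n) = x := Fin.ext (by simp only [Fin.val_mk]; omega)
    have eσ : posOf σ (x.val + 1) = (σ.symm x).val + 1 := by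
      rw [posOf_eq σ hx1 hx2, hfin]
    have eτ : posOf τ (x.val + 1) = (τ.symm x).val + 1 := by
      rw [posOf_eq τ hx1 hx2, hfin]
    apply Fin.ext
    omega
  have : σ.symm = τ.symm := Equiv.ext hsymm
  calc σ = σ.symm.symm := rfl
    _ = τ.symm.symm := by rw [this]
    _ = τ := rfl

end S13


namespace S13
variable {n : ℕ}

open Classical in
noncomputable def Meas (τ σ : Equiv.Perm (Fin n)) : ℕ :=
  ((Finset.Icc 1 n ×ˢ Finset.Icc 1 n).filter fun p => p ∈ InvL τ ∧ p ∉ InvL σ).card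

lemma mem_invL' (π : Equiv.Perm (Fin n)) {x y : ℕ} :
    (x, y) ∈ InvL π ↔ 1 ≤ x ∧ x < y ∧ y ≤ n ∧ posOf π y < posOf π x := Iff.rfl

lemma exists_cover (σ τ : Equiv.Perm (Fin n)) (hinv : InvL σ ⊆ InvL τ) (hne : σ ≠ τ) :
    ∃ σ', Covers σ σ' ∧ InvL σ' ⊆ InvL τ ∧ DesL σ ⊆ DesL σ' ∧
      (DesL σ' \ DesL σ).card ≤ 1 ∧ Meas τ σ' < Meas τ σ := by
  classical
  set S : Finset (ℕ × ℕ) :=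
    (Finset.Icc 1 n ×ˢ Finset.Icc 1 n).filter (fun p => p ∈ InvL τ ∧ p ∉ InvL σ) with hS
  have hbox : ∀ p : ℕ × ℕ, p ∈ InvL τ → p ∉ InvL σ → p ∈ S := by
    intro p h1 h2
    obtain ⟨q1, q2, q3, -⟩ := id h1
    simp only [hS, Finset.mem_filter, Finset.mem_product, Finset.mem_Icc]
    exact ⟨⟨⟨q1, by omega⟩, ⟨by omega, q3⟩⟩, h1, h2⟩
  have hSne : S.Nonempty := by
    by_contra hc
    rw [Finset.not_nonempty_iff_eq_empty] at hc
    apply hne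
    apply eq_of_invL_eq
    apply Set.Subset.antisymm hinv
    intro p hp
    by_contra hps
    have := hbox p hp hps
    rw [hc] at this
    exact absurd this (Finset.notMem_empty p)
  obtain ⟨⟨a, b⟩, habS, hmin⟩ := S.exists_min_image (fun p => posOf σ p.2 - posOf σ p.1) hSne
  simp only [hS, Finset.mem_filter] at habS
  obtain ⟨-, habτ, habσ⟩ := habS
  obtain ⟨ha1, hab, hb2, hposτ⟩ := (mem_invL' τ).mp habτ
  rw [mem_invL'] at habσ
  have ha2 : a ≤ n := by omega
  have hb1 : 1 ≤ b := by omega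
  set p := posOf σ a with hp
  set q := posOf σ b with hq
  obtain ⟨hp1, hp2⟩ := posOf_mem σ ha1 ha2
  obtain ⟨hq1, hq2⟩ := posOf_mem σ hb1 hb2
  have hpq : p < q := by
    have hneq : p ≠ q := fun e => by
      have := posOf_inj σ ha1 ha2 hb1 hb2 e; omega
    by_contra hc
    exact habσ ⟨ha1, hab, hb2, by omega⟩
  have hmin' : ∀ x y : ℕ, (x, y) ∈ InvL τ → (x, y) ∉ InvL σ →
      q - p ≤ posOf σ y - posOf σ x := by
    intro x y hxy1 hxy2
    exact hmin (x, y) (hbox _ hxy1 hxy2)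
  -- gap is 1
  have hgap : q = p + 1 := by
    by_contra hc
    have hr2 : p + 1 ≤ n := by omega
    have hr1 : 1 ≤ p + 1 := by omega
    set c := valAt σ (p + 1) with hcdef
    obtain ⟨hc1, hc2⟩ := valAt_mem σ hr1 hr2
    have hpc : posOf σ c = p + 1 := posOf_valAt σ hr1 hr2
    have hca : c ≠ a := fun e => by rw [e] at hpc; omega
    have hcb : c ≠ b := fun e => by rw [e] at hpc; omega
    rcases lt_trichotomy c a with hlt | heq | hgt
    · -- c < a : (c,a) ∈ InvL σ, new pair (c,b)
      have h1 : (c, a) ∈ InvL σ := (mem_invL' σ).mpr ⟨hc1, hlt, ha2, by omega⟩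
      obtain ⟨-, -, -, hτca⟩ := (mem_invL' τ).mp (hinv h1)
      have hnew : (c, b) ∈ InvL τ := (mem_invL' τ).mpr ⟨hc1, by omega, hb2, by omega⟩
      have hnews : (c, b) ∉ InvL σ := fun hx => by
        obtain ⟨-, -, -, hx⟩ := (mem_invL' σ).mp hx; omega
      have := hmin' c b hnew hnews
      omega
    · exact hca heq
    · rcases lt_trichotomy c b with hlt2 | heq2 | hgt2
      · -- a < c < b
        by_cases hτac : posOf τ c < posOf τ a
        · have hnew : (a, c) ∈ InvL τ := (mem_invL' τ).mpr ⟨ha1, hgt, hc2, hτac⟩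
          have hnews : (a, c) ∉ InvL σ := fun hx => by
            obtain ⟨-, -, -, hx⟩ := (mem_invL' σ).mp hx; omega
          have := hmin' a c hnew hnews
          omega
        · have hne2 : posOf τ a ≠ posOf τ c := fun e =>
            hca ((posOf_inj τ hc1 hc2 ha1 ha2 e.symm))
          have hnew : (c, b) ∈ InvL τ := (mem_invL' τ).mpr ⟨hc1, hlt2, hb2, by omega⟩
          have hnews : (c, b) ∉ InvL σ := fun hx => by
            obtain ⟨-, -, -, hx⟩ := (mem_invL' σ).mp hx; omega
          have := hmin' c b hnew hnews
          omega
      · exact hcb heq2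
      · -- b < c : (b,c) ∈ InvL σ, new pair (a,c)
        have h1 : (b, c) ∈ InvL σ := (mem_invL' σ).mpr ⟨hb1, hgt2, hc2, by omega⟩
        obtain ⟨-, -, -, hτbc⟩ := (mem_invL' τ).mp (hinv h1)
        have hnew : (a, c) ∈ InvL τ := (mem_invL' τ).mpr ⟨ha1, by omega, hc2, by omega⟩
        have hnews : (a, c) ∉ InvL σ := fun hx => by
          obtain ⟨-, -, -, hx⟩ := (mem_invL' σ).mp hx; omega
        have := hmin' a c hnew hnews
        omega
  -- now build the cover
  have hip2 : p ≤ n - 1 := by omega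
  have hva : valAt σ p = a := by rw [hp]; exact valAt_posOf σ ha1 ha2
  have hvb : valAt σ (p + 1) = b := by rw [← hgap, hq]; exact valAt_posOf σ hb1 hb2
  have hvab : valAt σ p < valAt σ (p + 1) := by rw [hva, hvb]; exact hab
  refine ⟨σ * Equiv.swap ⟨p - 1, by omega⟩ ⟨p, by omega⟩, ⟨p, hp1, hip2, hvab, rfl⟩, ?_⟩
  have hswap := invL_mul_swap σ hp1 hip2 hvab
  rw [hva, hvb] at hswap
  have hsub : InvL (σ * Equiv.swap ⟨p - 1, by omega⟩ ⟨p, by omega⟩) ⊆ InvL τ := by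
    rw [hswap]
    intro x hx
    rcases hx with hx | hx
    · exact hinv hx
    · rw [hx]; exact (mem_invL' τ).mpr ⟨ha1, hab, hb2, hposτ⟩
  obtain ⟨hdes1, hdes2⟩ := desL_step hswap
  refine ⟨hsub, hdes1, hdes2, ?_⟩
  apply Finset.card_lt_card
  constructor
  · intro x hx
    simp only [Finset.mem_filter] at hx ⊢
    refine ⟨hx.1, hx.2.1, fun hc2 => hx.2.2 ?_⟩
    rw [hswap]
    exact Set.mem_union_left _ hc2
  · intro hcsub
    have habS' : (a, b) ∈ S := hbox _ ((mem_invL' τ).mpr ⟨ha1, hab, hb2, hposτ⟩)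
      (fun hx => by obtain ⟨-, -, -, hx⟩ := (mem_invL' σ).mp hx; omega)
    have := hcsub habS'
    simp only [Finset.mem_filter] at this
    apply this.2.2
    rw [hswap]
    exact Set.mem_union_right _ rfl

end S13

namespace S13
variable {n : ℕ}

lemma chain_aux (τ : Equiv.Perm (Fin n)) :
    ∀ m : ℕ, ∀ σ : Equiv.Perm (Fin n), InvL σ ⊆ InvL τ → Meas τ σ ≤ m →
    ∃ (k : ℕ) (c : ℕ → Equiv.Perm (Fin n)), c 0 = σ ∧ c k = τ ∧
      ∀ j, j < k → Covers (c j) (c (j + 1)) ∧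
        DesL (c j) ⊆ DesL (c (j + 1)) ∧
        (DesL (c (j + 1)) \ DesL (c j)).card ≤ 1 := by
  intro m
  induction m with
  | zero =>
    intro σ hinv hm
    by_cases hne : σ = τ
    · exact ⟨0, fun _ => σ, rfl, by rw [hne], fun j hj => absurd hj (by omega)⟩
    · obtain ⟨σ', -, -, -, -, hlt⟩ := exists_cover σ τ hinv hne
      omega
  | succ m ih =>
    intro σ hinv hm
    by_cases hne : σ = τ
    · exact ⟨0, fun _ => σ, rfl, by rw [hne], fun j hj => absurd hj (by omega)⟩
    · obtain ⟨σ', hcov, hsub, hd1, hd2, hlt⟩ := exists_cover σ τ hinv hne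
      obtain ⟨k, c, hc0, hck, hcstep⟩ := ih σ' hsub (by omega)
      refine ⟨k + 1, fun j => if j = 0 then σ else c (j - 1), by simp, by simp [hck], ?_⟩
      intro j hj
      rcases Nat.eq_zero_or_pos j with rfl | hjpos
      · simpa [hc0] using ⟨hcov, hd1, hd2⟩
      · have h1 : j ≠ 0 := by omega
        have h2 : j + 1 ≠ 0 := by omega
        simp only [h1, h2, if_neg, ite_false]
        have : j - 1 + 1 = j := by omega
        have hstep := hcstep (j - 1) (by omega)
        rw [this] at hstep
        exact hstep

end S13

/-- if `Inv_L(σ) ⊆ Inv_L(τ)` (i.e. `σ ≤ τ` in the right weak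
Bruhat order), then there is a sequence `σ = π₀, π₁, …, π_k = τ` such that
each `π_{j+1}` covers `π_j` in the right weak Bruhat order,
`Des_L(π_j) ⊆ Des_L(π_{j+1})`, and `|Des_L(π_{j+1}) \ Des_L(π_j)| ≤ 1`. -/
theorem stmt13 {n : ℕ} (σ τ : Equiv.Perm (Fin n)) (hinv : InvL σ ⊆ InvL τ) :
    ∃ (k : ℕ) (c : ℕ → Equiv.Perm (Fin n)), c 0 = σ ∧ c k = τ ∧
      ∀ j, j < k → Covers (c j) (c (j + 1)) ∧
        DesL (c j) ⊆ DesL (c (j + 1)) ∧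
        (DesL (c (j + 1)) \ DesL (c j)).card ≤ 1 := by
  exact S13.chain_aux τ (S13.Meas τ σ) σ hinv le_rfl
end
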